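/- arXiv:1310.1708 — 3 statements merged into one kernel-verified Lean document; each statement's English description precedes it below -/
import Mathlib

section
/- For 1 ≤ k ≤ ℓ−1, r ≥ 2 and 1 ≤ i < j ≤ k: the restriction of A^k_ℓ(r) to the hyperplane ker(x_i − ζ x_j) is isomorphic to A^{k−1}_{ℓ−1}(r). -/
open scoped Classical

noncomputable section

namespace ArrPaper

/-- A (linear) hyperplane in a complex vector space. -/
def IsHyperplane {V : Type*} [AddCommGroup V] [Module ℂ V] (H : Submodule ℂ V) : Prop :=
  ∃ f : V →ₗ[ℂ] ℂ, f ≠ 0 ∧ H = LinearMap.ker f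

/-- The linear polynomial associated to a linear functional on `ℂ^ℓ`. -/
def linForm {ℓ : ℕ} (φ : (Fin ℓ → ℂ) →ₗ[ℂ] ℂ) : MvPolynomial (Fin ℓ) ℂ :=
  ∑ i, MvPolynomial.C (φ (Pi.single i 1)) * MvPolynomial.X i

/-- A derivation `θ = ∑ θᵢ ∂/∂xᵢ` applied to a polynomial. -/
def derApply {ℓ : ℕ} (θ : Fin ℓ → MvPolynomial (Fin ℓ) ℂ) (p : MvPolynomial (Fin ℓ) ℂ) :
    MvPolynomial (Fin ℓ) ℂ :=
  ∑ i, θ i * MvPolynomial.pderiv i p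

/-- The module `D(A)` of logarithmic derivations of an arrangement, as a set. -/
def DerSet {ℓ : ℕ} (A : Finset (Submodule ℂ (Fin ℓ → ℂ))) :
    Set (Fin ℓ → MvPolynomial (Fin ℓ) ℂ) :=
  {θ | ∀ H ∈ A, ∀ φ : (Fin ℓ → ℂ) →ₗ[ℂ] ℂ, LinearMap.ker φ = H →
        ∃ q, derApply θ (linForm φ) = linForm φ * q}

/-- `A` is a free arrangement with multiset of exponents `E`: `D(A)` admits a
homogeneous basis whose polynomial degrees form the multiset `E`. -/
def IsFreeWithExp {ℓ : ℕ} (A : Finset (Submodule ℂ (Fin ℓ → ℂ))) (E : Multiset ℕ) : Prop :=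
  ∃ (θ : Fin ℓ → Fin ℓ → MvPolynomial (Fin ℓ) ℂ) (d : Fin ℓ → ℕ),
    E = ↑(List.ofFn d) ∧
    (∀ i j, MvPolynomial.IsHomogeneous (θ i j) (d i)) ∧
    (∀ i, θ i ∈ DerSet A) ∧
    (∀ η ∈ DerSet A, ∃! c : Fin ℓ → MvPolynomial (Fin ℓ) ℂ,
       η = fun j => ∑ i, c i * θ i j)

/-- `A` is a free arrangement. -/
def IsFree {ℓ : ℕ} (A : Finset (Submodule ℂ (Fin ℓ → ℂ))) : Prop :=
  ∃ E, IsFreeWithExp A E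

/-- The restriction `A^X` of an arrangement to `X ∈ L(A)`, transported to a
coordinate space via a linear isomorphism `e : X ≃ ℂ^p`. -/
def restrictTo {ℓ p : ℕ} (A : Finset (Submodule ℂ (Fin ℓ → ℂ)))
    (X : Submodule ℂ (Fin ℓ → ℂ)) (e : X ≃ₗ[ℂ] (Fin p → ℂ)) :
    Finset (Submodule ℂ (Fin p → ℂ)) :=
  (A.filter fun H => ¬ X ≤ H).image fun H =>
    (H.comap X.subtype).map e.toLinearMap

/-- The class of inductively free arrangements. -/
inductive IndFree : ∀ ℓ : ℕ, Finset (Submodule ℂ (Fin ℓ → ℂ)) → Prop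
  | empty (ℓ : ℕ) : IndFree ℓ ∅
  | add {ℓ : ℕ} (A : Finset (Submodule ℂ (Fin ℓ → ℂ))) (H₀ : Submodule ℂ (Fin ℓ → ℂ))
      (hH₀ : H₀ ∈ A) (e : H₀ ≃ₗ[ℂ] (Fin (ℓ - 1) → ℂ)) (E' E'' : Multiset ℕ)
      (h' : IndFree ℓ (A.erase H₀))
      (h'' : IndFree (ℓ - 1) (restrictTo A H₀ e))
      (hE' : IsFreeWithExp (A.erase H₀) E')
      (hE'' : IsFreeWithExp (restrictTo A H₀ e) E'')
      (hle : E'' ≤ E') : IndFree ℓ A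

/-- The class of recursively free arrangements. -/
inductive RecFree : ∀ ℓ : ℕ, Finset (Submodule ℂ (Fin ℓ → ℂ)) → Prop
  | empty (ℓ : ℕ) : RecFree ℓ ∅
  | add {ℓ : ℕ} (A : Finset (Submodule ℂ (Fin ℓ → ℂ))) (H₀ : Submodule ℂ (Fin ℓ → ℂ))
      (hH₀ : H₀ ∈ A) (e : H₀ ≃ₗ[ℂ] (Fin (ℓ - 1) → ℂ)) (E' E'' : Multiset ℕ)
      (h' : RecFree ℓ (A.erase H₀))
      (h'' : RecFree (ℓ - 1) (restrictTo A H₀ e))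
      (hE' : IsFreeWithExp (A.erase H₀) E')
      (hE'' : IsFreeWithExp (restrictTo A H₀ e) E'')
      (hle : E'' ≤ E') : RecFree ℓ A
  | del {ℓ : ℕ} (A : Finset (Submodule ℂ (Fin ℓ → ℂ))) (H₀ : Submodule ℂ (Fin ℓ → ℂ))
      (hH₀ : H₀ ∈ A) (e : H₀ ≃ₗ[ℂ] (Fin (ℓ - 1) → ℂ)) (E E'' : Multiset ℕ)
      (hA : RecFree ℓ A)
      (h'' : RecFree (ℓ - 1) (restrictTo A H₀ e))
      (hE : IsFreeWithExp A E)
      (hE'' : IsFreeWithExp (restrictTo A H₀ e) E'')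
      (hle : E'' ≤ E) : RecFree ℓ (A.erase H₀)

/-- The intersection lattice `L(A)` of an arrangement. -/
def latticeOf {ℓ : ℕ} (A : Finset (Submodule ℂ (Fin ℓ → ℂ))) :
    Set (Submodule ℂ (Fin ℓ → ℂ)) :=
  {X | ∃ B : Finset (Submodule ℂ (Fin ℓ → ℂ)), B ⊆ A ∧ X = B.inf id}

/-- `A` is hereditarily inductively free: every restriction `A^X`, `X ∈ L(A)`,
is inductively free. -/
def HeredIndFree {ℓ : ℕ} (A : Finset (Submodule ℂ (Fin ℓ → ℂ))) : Prop :=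
  ∀ X ∈ latticeOf A, ∀ (q : ℕ) (e : X ≃ₗ[ℂ] (Fin q → ℂ)), IndFree q (restrictTo A X e)

/-- A primitive `r`-th root of unity. -/
def zeta (r : ℕ) : ℂ := Complex.exp (2 * Real.pi * Complex.I / r)

/-- The hyperplane `ker (xᵢ - ζⁿ xⱼ)`. -/
def hypIJ {ℓ : ℕ} (r : ℕ) (i j : Fin ℓ) (n : ℕ) : Submodule ℂ (Fin ℓ → ℂ) :=
  LinearMap.ker ((LinearMap.proj i : (Fin ℓ → ℂ) →ₗ[ℂ] ℂ)
    - (zeta r ^ n) • (LinearMap.proj j : (Fin ℓ → ℂ) →ₗ[ℂ] ℂ))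

/-- The intermediate arrangement `A^k_ℓ(r)`, with hyperplanes `ker xᵢ` (`i < k`,
0-based) and `ker (xᵢ - ζⁿ xⱼ)` (`i < j`, `n < r`). -/
def interArr (r ℓ k : ℕ) : Finset (Submodule ℂ (Fin ℓ → ℂ)) :=
  (((Finset.univ : Finset (Fin ℓ)).filter fun i : Fin ℓ => (i : ℕ) < k).image
      fun i => LinearMap.ker (LinearMap.proj i : (Fin ℓ → ℂ) →ₗ[ℂ] ℂ))
  ∪ (((Finset.univ : Finset (Fin ℓ × Fin ℓ × Fin r)).filter fun p => p.1 < p.2.1).image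
      fun p => hypIJ r p.1 p.2.1 (p.2.2 : ℕ))

/-- The multiset of exponents `{1, r+1, …, (ℓ-2)r+1, (ℓ-1)r - ℓ + k + 1}` of `A^k_ℓ(r)`. -/
def interExp (r ℓ k : ℕ) : Multiset ℕ :=
  ((ℓ - 1) * r - ℓ + k + 1) ::ₘ ((Multiset.range (ℓ - 1)).map fun m => m * r + 1)

/-- The product arrangement `A₁ × A₂` in coordinates, on `ℂ^{ℓ₁+ℓ₂}`. -/
def prodArr {ℓ₁ ℓ₂ : ℕ} (A₁ : Finset (Submodule ℂ (Fin ℓ₁ → ℂ)))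
    (A₂ : Finset (Submodule ℂ (Fin ℓ₂ → ℂ))) :
    Finset (Submodule ℂ (Fin (ℓ₁ + ℓ₂) → ℂ)) :=
  (A₁.image fun H => H.comap (LinearMap.funLeft ℂ ℂ (Fin.castAdd ℓ₂)))
  ∪ (A₂.image fun H => H.comap (LinearMap.funLeft ℂ ℂ (Fin.natAdd ℓ₁)))

end ArrPaper

section StmtNineAux
open ArrPaper

variable {r : ℕ}

theorem zeta_prim9 (hr : 2 ≤ r) : IsPrimitiveRoot (zeta r) r :=
  Complex.isPrimitiveRoot_exp r (by omega)

theorem zeta_ne_zero9 : zeta r ≠ 0 := Complex.exp_ne_zero _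

theorem zeta_pow_r9 (hr : 2 ≤ r) : zeta r ^ r = 1 := (zeta_prim9 hr).pow_eq_one

theorem zeta_pow_mod9 (hr : 2 ≤ r) (n : ℕ) : zeta r ^ n = zeta r ^ (n % r) := by
  conv_lhs => rw [← Nat.div_add_mod n r]
  rw [pow_add, pow_mul, zeta_pow_r9 hr, one_pow, one_mul]

theorem zeta_mul_inv9 (hr : 2 ≤ r) (n : ℕ) :
    zeta r ^ n * zeta r ^ ((r - n % r) % r) = 1 := by
  rw [zeta_pow_mod9 hr n, ← pow_add]
  rcases Nat.eq_zero_or_pos (n % r) with h | h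
  · rw [h, Nat.sub_zero, Nat.mod_self, pow_zero]
  · have h2 : n % r < r := Nat.mod_lt _ (by omega)
    rw [Nat.mod_eq_of_lt (by omega : r - n % r < r),
      show n % r + (r - n % r) = r by omega, zeta_pow_r9 hr]

theorem mem_hypIJ9 {ℓ : ℕ} (a b : Fin ℓ) (n : ℕ) (v : Fin ℓ → ℂ) :
    v ∈ hypIJ r a b n ↔ v a = zeta r ^ n * v b := by
  simp [hypIJ, LinearMap.mem_ker, sub_eq_zero, smul_eq_mul]

theorem mem_kerProj9 {ℓ : ℕ} (a : Fin ℓ) (v : Fin ℓ → ℂ) :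
    v ∈ LinearMap.ker (LinearMap.proj a : (Fin ℓ → ℂ) →ₗ[ℂ] ℂ) ↔ v a = 0 := by
  simp [LinearMap.mem_ker]

theorem hypIJ_mod9 (hr : 2 ≤ r) {ℓ : ℕ} (a b : Fin ℓ) (n : ℕ) :
    hypIJ r a b n = hypIJ r a b (n % r) := by
  unfold hypIJ; rw [← zeta_pow_mod9 hr]

theorem hypIJ_swap9 (hr : 2 ≤ r) {ℓ : ℕ} (a b : Fin ℓ) (n n' : ℕ)
    (h : zeta r ^ n * zeta r ^ n' = 1) :
    hypIJ r a b n = hypIJ r b a n' := by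
  ext v
  rw [mem_hypIJ9, mem_hypIJ9]
  constructor
  · intro hv
    have h2 : zeta r ^ n' * v a = zeta r ^ n' * (zeta r ^ n * v b) := by rw [hv]
    rw [← mul_assoc, mul_comm (zeta r ^ n') (zeta r ^ n), h, one_mul] at h2
    exact h2.symm
  · intro hv
    have h2 : zeta r ^ n * v b = zeta r ^ n * (zeta r ^ n' * v a) := by rw [hv]
    rw [← mul_assoc, h, one_mul] at h2
    exact h2.symm

theorem mem_interArr9 {r ℓ k : ℕ} {X : Submodule ℂ (Fin ℓ → ℂ)} :
    X ∈ interArr r ℓ k ↔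
      (∃ a : Fin ℓ, (a : ℕ) < k ∧
          X = LinearMap.ker (LinearMap.proj a : (Fin ℓ → ℂ) →ₗ[ℂ] ℂ)) ∨
      (∃ a b : Fin ℓ, ∃ n : Fin r, a < b ∧ X = hypIJ r a b (n : ℕ)) := by
  simp only [interArr, Finset.mem_union, Finset.mem_image, Finset.mem_filter,
    Finset.mem_univ, true_and, Prod.exists]
  constructor
  · rintro (⟨a, ha, rfl⟩ | ⟨a, b, n, h, rfl⟩)
    · exact Or.inl ⟨a, ha, rfl⟩
    · exact Or.inr ⟨a, b, n, h, rfl⟩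
  · rintro (⟨a, ha, rfl⟩ | ⟨a, b, n, h, rfl⟩)
    · exact Or.inl ⟨a, ha, rfl⟩
    · exact Or.inr ⟨a, b, n, h, rfl⟩

theorem succAbove_coe9 {n : ℕ} (i : Fin (n + 1)) (c : Fin n) :
    ((i.succAbove c : Fin (n + 1)) : ℕ)
      = if (c : ℕ) < (i : ℕ) then (c : ℕ) else (c : ℕ) + 1 := by
  rcases lt_or_ge ((c : ℕ)) ((i : ℕ)) with h | h
  · rw [Fin.succAbove_of_castSucc_lt _ _ (by simpa [Fin.lt_def] using h), if_pos h]
    simp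
  · rw [Fin.succAbove_of_le_castSucc _ _ (by simpa [Fin.le_def] using h), if_neg (by omega)]
    simp

/-- The linear section inserting `x_i = ζ x_j`. -/
def sMap (r : ℕ) {m : ℕ} (i : Fin (m + 2)) (jj : Fin (m + 1)) :
    (Fin (m + 1) → ℂ) →ₗ[ℂ] (Fin (m + 2) → ℂ) where
  toFun v := i.insertNth (zeta r * v jj) v
  map_add' v w := by
    funext a
    rcases eq_or_ne a i with rfl | h
    · simp [Fin.insertNth_apply_same, mul_add]
    · obtain ⟨c, rfl⟩ := Fin.exists_succAbove_eq h
      simp [Fin.insertNth_apply_succAbove]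
  map_smul' t v := by
    funext a
    rcases eq_or_ne a i with rfl | h
    · simp only [Fin.insertNth_apply_same, Pi.smul_apply, smul_eq_mul, RingHom.id_apply]
      ring
    · obtain ⟨c, rfl⟩ := Fin.exists_succAbove_eq h
      simp [Fin.insertNth_apply_succAbove]

theorem sMap_succAbove (r : ℕ) {m : ℕ} (i : Fin (m + 2)) (jj : Fin (m + 1))
    (v : Fin (m + 1) → ℂ) (c : Fin (m + 1)) :
    sMap r i jj v (i.succAbove c) = v c :=
  Fin.insertNth_apply_succAbove (α := fun _ => ℂ) i (zeta r * v jj) v c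

theorem sMap_same (r : ℕ) {m : ℕ} (i : Fin (m + 2)) (jj : Fin (m + 1))
    (v : Fin (m + 1) → ℂ) :
    sMap r i jj v i = zeta r * v jj :=
  Fin.insertNth_apply_same (α := fun _ => ℂ) i (zeta r * v jj) v

end StmtNineAux

open ArrPaper in
/-- For `1 ≤ k ≤ ℓ - 1` and `i < j ≤ k` (1-based), the restriction of
`A^k_ℓ(r)` to `ker (x_i - ζ x_j)`, identified with `ℂ^{ℓ-1}` via the
substitution `x_i = ζ x_j` (i.e. the coordinate projection forgetting `x_i`),
is `A^{k-1}_{ℓ-1}(r)`.  (Here `ℓ = m + 2`, indices 0-based.) -/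
theorem stmt9 (r m k : ℕ) (hr : 2 ≤ r) (hk1 : 1 ≤ k) (hk2 : k ≤ m + 1)
    (i j : Fin (m + 2)) (hij : i < j) (hjk : (j : ℕ) < k) :
    ((interArr r (m + 2) k).filter fun H => ¬ hypIJ r i j 1 ≤ H).image
        (fun H => (H ⊓ hypIJ r i j 1).map
          (LinearMap.funLeft ℂ ℂ (Fin.succAbove i) :
            (Fin (m + 2) → ℂ) →ₗ[ℂ] (Fin (m + 1) → ℂ)))
      = interArr r (m + 1) (k - 1) := by
  have hprim : IsPrimitiveRoot (zeta r) r := zeta_prim9 hr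
  have hjval : (i : ℕ) < (j : ℕ) := hij
  have hj1 : 1 ≤ (j : ℕ) := by omega
  set jj : Fin (m + 1) := ⟨(j : ℕ) - 1, by omega⟩ with hjjdef
  have hjjval : (jj : ℕ) = (j : ℕ) - 1 := rfl
  have hsa_jj : i.succAbove jj = j := by
    apply Fin.ext
    rw [succAbove_coe9, if_neg (by omega)]
    omega
  set s : (Fin (m + 1) → ℂ) →ₗ[ℂ] (Fin (m + 2) → ℂ) := sMap r i jj with hs
  have hs_succ : ∀ (v : Fin (m + 1) → ℂ) (c : Fin (m + 1)), s v (i.succAbove c) = v c :=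
    sMap_succAbove r i jj
  have hs_i : ∀ v : Fin (m + 1) → ℂ, s v i = zeta r * v jj :=
    sMap_same r i jj
  have hs_j : ∀ v : Fin (m + 1) → ℂ, s v j = v jj := fun v => by
    rw [← hsa_jj, hs_succ]
  have hmem0 : ∀ u : Fin (m + 2) → ℂ, u ∈ hypIJ r i j 1 ↔ u i = zeta r * u j := fun u => by
    rw [mem_hypIJ9, pow_one]
  have hsH0 : ∀ v, s v ∈ hypIJ r i j 1 := fun v => by
    rw [hmem0, hs_i, hs_j]
  have hs_sect : ∀ u ∈ hypIJ r i j 1, s (fun c => u (i.succAbove c)) = u := by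
    intro u hu
    funext a
    rcases eq_or_ne a i with rfl | h
    · rw [hs_i, hsa_jj]
      exact ((hmem0 u).mp hu).symm
    · obtain ⟨c, rfl⟩ := Fin.exists_succAbove_eq h
      rw [hs_succ]
  have key : ∀ H : Submodule ℂ (Fin (m + 2) → ℂ),
      (H ⊓ hypIJ r i j 1).map
        (LinearMap.funLeft ℂ ℂ (Fin.succAbove i) :
          (Fin (m + 2) → ℂ) →ₗ[ℂ] (Fin (m + 1) → ℂ)) = H.comap s := by
    intro H
    ext v
    simp only [Submodule.mem_map, Submodule.mem_inf, Submodule.mem_comap]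
    constructor
    · rintro ⟨u, ⟨hu, hu0⟩, rfl⟩
      have hfl : (LinearMap.funLeft ℂ ℂ (Fin.succAbove i) u) = fun c => u (i.succAbove c) := rfl
      rw [hfl, hs_sect u hu0]
      exact hu
    · intro hv
      refine ⟨s v, ⟨hv, hsH0 v⟩, ?_⟩
      funext c
      rw [LinearMap.funLeft_apply, hs_succ]
  simp only [key]
  ext X
  simp only [Finset.mem_image, Finset.mem_filter]
  constructor
  · rintro ⟨H, ⟨hH, hH0⟩, rfl⟩
    rcases mem_interArr9.mp hH with ⟨a, hak, rfl⟩ | ⟨a, b, n, hab, rfl⟩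
    · -- coordinate hyperplane ker x_a
      rcases eq_or_ne a i with rfl | hai
      · rw [mem_interArr9]
        left
        refine ⟨jj, by omega, ?_⟩
        ext v
        rw [Submodule.mem_comap, mem_kerProj9, mem_kerProj9, hs_i]
        constructor
        · intro h
          rcases mul_eq_zero.mp h with h | h
          · exact absurd h zeta_ne_zero9
          · exact h
        · intro h
          rw [h, mul_zero]
      · obtain ⟨c, rfl⟩ := Fin.exists_succAbove_eq hai
        have hcoe := succAbove_coe9 i c
        rw [mem_interArr9]
        left
        refine ⟨c, ?_, ?_⟩
        · by_cases hci : (c : ℕ) < (i : ℕ)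
          · rw [if_pos hci] at hcoe; omega
          · rw [if_neg hci] at hcoe; omega
        · ext v
          rw [Submodule.mem_comap, mem_kerProj9, mem_kerProj9, hs_succ]
    · -- hyperplane ker (x_a - ζ^n x_b)
      rcases eq_or_ne a i with rfl | hai
      · rcases eq_or_ne b j with rfl | hbj
        · -- (i, j, n), n ≠ 1
          have hn1 : (n : ℕ) ≠ 1 := by
            intro h1
            apply hH0
            rw [h1]
          rw [mem_interArr9]
          left
          refine ⟨jj, by omega, ?_⟩
          ext v
          rw [Submodule.mem_comap, mem_hypIJ9, mem_kerProj9, hs_i, hs_j]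
          constructor
          · intro h
            have hne : zeta r - zeta r ^ (n : ℕ) ≠ 0 := by
              intro h0
              exact hn1 ((hprim.pow_inj (by omega) n.isLt
                (by rw [pow_one]; exact sub_eq_zero.mp h0)).symm)
            have h2 : (zeta r - zeta r ^ (n : ℕ)) * v jj = 0 := by linear_combination h
            rcases mul_eq_zero.mp h2 with h | h
            · exact absurd h hne
            · exact h
          · intro h
            rw [h, mul_zero, mul_zero]
        · -- (i, b, n) with b ≠ j
          have hbi : b ≠ a := ne_of_gt hab
          obtain ⟨d, rfl⟩ := Fin.exists_succAbove_eq hbi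
          have hdjj : d ≠ jj := by
            intro h
            apply hbj
            rw [h, hsa_jj]
          have hq_lt : ((n : ℕ) + r - 1) % r < r := Nat.mod_lt _ (by omega)
          have hζq : zeta r * zeta r ^ (((n : ℕ) + r - 1) % r) = zeta r ^ (n : ℕ) := by
            rw [← zeta_pow_mod9 hr, ← pow_succ',
              show (n : ℕ) + r - 1 + 1 = (n : ℕ) + r by omega,
              pow_add, zeta_pow_r9 hr, mul_one]
          have hcomap : (hypIJ r a (a.succAbove d) (n : ℕ)).comap s
              = hypIJ r jj d (((n : ℕ) + r - 1) % r) := by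
            ext v
            rw [Submodule.mem_comap, mem_hypIJ9, mem_hypIJ9, hs_i, hs_succ]
            constructor
            · intro h
              apply mul_left_cancel₀ (zeta_ne_zero9 (r := r))
              rw [← mul_assoc, hζq]
              exact h
            · intro h
              rw [h, ← mul_assoc, hζq]
          rw [mem_interArr9]
          right
          rcases lt_trichotomy jj d with hlt | heq | hgt
          · exact ⟨jj, d, ⟨_, hq_lt⟩, hlt, by rw [hcomap]⟩
          · exact absurd heq.symm hdjj
          · refine ⟨d, jj, ⟨(r - (((n : ℕ) + r - 1) % r) % r) % r,
              Nat.mod_lt _ (by omega)⟩, hgt, ?_⟩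
            rw [hcomap, hypIJ_swap9 hr jj d _ _ (zeta_mul_inv9 hr _)]
      · rcases eq_or_ne b i with rfl | hbi
        · -- (a, i, n), a < i
          obtain ⟨c, rfl⟩ := Fin.exists_succAbove_eq hai
          have hci : ((b.succAbove c : Fin (m + 2)) : ℕ) < (b : ℕ) := hab
          have hcoe := succAbove_coe9 b c
          have hcval : (c : ℕ) < (b : ℕ) := by
            by_cases h : (c : ℕ) < (b : ℕ)
            · exact h
            · rw [if_neg h] at hcoe; omega
          have hcjj : c < jj := by
            rw [Fin.lt_def]
            omega
          rw [mem_interArr9]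
          right
          refine ⟨c, jj, ⟨((n : ℕ) + 1) % r, Nat.mod_lt _ (by omega)⟩, hcjj, ?_⟩
          ext v
          rw [Submodule.mem_comap, mem_hypIJ9, mem_hypIJ9, hs_succ, hs_i,
            ← zeta_pow_mod9 hr, pow_succ, mul_assoc]
        · -- a, b ≠ i
          obtain ⟨c, rfl⟩ := Fin.exists_succAbove_eq hai
          obtain ⟨d, rfl⟩ := Fin.exists_succAbove_eq hbi
          have hcd : c < d := Fin.succAbove_lt_succAbove_iff.mp hab
          rw [mem_interArr9]
          right
          refine ⟨c, d, n, hcd, ?_⟩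
          ext v
          rw [Submodule.mem_comap, mem_hypIJ9, mem_hypIJ9, hs_succ, hs_succ]
  · intro hX
    rcases mem_interArr9.mp hX with ⟨c, hck, rfl⟩ | ⟨c, d, n, hcd, rfl⟩
    · refine ⟨LinearMap.ker (LinearMap.proj (i.succAbove c) :
        (Fin (m + 2) → ℂ) →ₗ[ℂ] ℂ), ⟨?_, ?_⟩, ?_⟩
      · rw [mem_interArr9]
        left
        refine ⟨i.succAbove c, ?_, rfl⟩
        have hcoe := succAbove_coe9 i c
        by_cases h : (c : ℕ) < (i : ℕ)
        · rw [if_pos h] at hcoe; omega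
        · rw [if_neg h] at hcoe; omega
      · intro hle
        have h1 := hle (hsH0 (Pi.single c 1))
        rw [mem_kerProj9, hs_succ] at h1
        simp at h1
      · ext v
        rw [Submodule.mem_comap, mem_kerProj9, mem_kerProj9, hs_succ]
    · refine ⟨hypIJ r (i.succAbove c) (i.succAbove d) (n : ℕ), ⟨?_, ?_⟩, ?_⟩
      · rw [mem_interArr9]
        right
        exact ⟨_, _, n, Fin.succAbove_lt_succAbove_iff.mpr hcd, rfl⟩
      · intro hle
        have h1 := hle (hsH0 (Pi.single c 1))
        rw [mem_hypIJ9, hs_succ, hs_succ] at h1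
        rw [Pi.single_eq_same, Pi.single_eq_of_ne (ne_of_gt hcd), mul_zero] at h1
        exact one_ne_zero h1
      · ext v
        rw [Submodule.mem_comap, mem_hypIJ9, mem_hypIJ9, hs_succ, hs_succ]
end
end

section
/- For 1 ≤ k ≤ ℓ−1, r ≥ 2 and 1 ≤ i ≤ k < j ≤ ℓ: the restriction of A^k_ℓ(r) to ker(x_i − ζ x_j) is isomorphic to A^k_{ℓ−1}(r); and for k < i < j ≤ ℓ, the restriction of A^k_ℓ(r) to ker(x_i − ζ x_j) is isomorphic to A^{k+1}_{ℓ−1}(r). -/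
open scoped Classical

noncomputable section

/-! Restricting to `x_i = ζ x_j` amounts to pulling hyperplanes back along a parametrisation
`ℂ^{ℓ-1} → ℂ^ℓ` whose coordinates are roots of unity times coordinates of `ℂ^{ℓ-1}`, with `x_i`
and `x_j` both read off one merged coordinate. Pulling back turns `ker x_a` into a coordinate
hyperplane and `ker (x_a - c x_b)` with `cʳ = 1` into a hyperplane of the same form, except for
`{a, b} = {i, j}`, which gives the whole space (`c = ζ`) or the coordinate hyperplane of the
merged coordinate. For `i < k ≤ j` the merged coordinate is `x_i`, already among the first `k`;
for `k ≤ i < j` it is placed at position `k`, and its hyperplane is the new one, coming from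
`x_i = x_j` because `ζ ≠ 1`. -/

namespace ArrPaper

open LinearMap

section TwoCoordinateForms

variable {K ι : Type*} [Field K]

lemma ker_proj_ne_top [DecidableEq ι] (u : ι) : ker (proj u : (ι → K) →ₗ[K] K) ≠ ⊤ := by
  intro h
  have : (Pi.single u 1 : ι → K) ∈ ker (proj u : (ι → K) →ₗ[K] K) := h ▸ Submodule.mem_top
  simp at this

lemma ker_proj_sub_smul_proj_ne_top [DecidableEq ι] {u v : ι} (huv : u ≠ v) (c : K) :
    ker ((proj u : (ι → K) →ₗ[K] K) - c • proj v) ≠ ⊤ := by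
  intro h
  have : (Pi.single u 1 : ι → K) ∈ ker ((proj u : (ι → K) →ₗ[K] K) - c • proj v) :=
    h ▸ Submodule.mem_top
  simp [huv.symm] at this

lemma ker_smul_proj_sub_smul_proj {α : K} (hα : α ≠ 0) (β : K) (u v : ι) :
    ker (α • (proj u : (ι → K) →ₗ[K] K) - β • proj v) = ker (proj u - (β / α) • proj v) := by
  rw [← ker_smul (proj u - (β / α) • proj v) α hα]
  congr 1
  ext x
  simp only [LinearMap.sub_apply, LinearMap.smul_apply, coe_proj, Function.eval, smul_eq_mul]
  field_simp

lemma ker_proj_sub_smul_proj_comm {c : K} (hc : c ≠ 0) (u v : ι) :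
    ker ((proj u : (ι → K) →ₗ[K] K) - c • proj v) = ker (proj v - c⁻¹ • proj u) := by
  rw [← ker_smul (proj v - c⁻¹ • proj u) (-c) (neg_ne_zero.2 hc)]
  congr 1
  ext x
  simp only [LinearMap.sub_apply, LinearMap.smul_apply, coe_proj, Function.eval, smul_eq_mul]
  field_simp
  ring

lemma ker_smul_proj_sub_smul_proj_self {α β : K} (hαβ : α ≠ β) (u : ι) :
    ker (α • (proj u : (ι → K) →ₗ[K] K) - β • proj u) = ker (proj u) := by
  rw [← ker_smul (proj u) _ (sub_ne_zero.2 hαβ)]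
  congr 1
  ext x
  simp [sub_mul]

end TwoCoordinateForms

section RootsOfUnity

variable {r : ℕ}

lemma isPrimitiveRoot_zeta (hr : r ≠ 0) : IsPrimitiveRoot (zeta r) r :=
  Complex.isPrimitiveRoot_exp r hr

lemma zeta_ne_one (hr : 2 ≤ r) : zeta r ≠ 1 :=
  (isPrimitiveRoot_zeta (by omega)).ne_one hr

lemma ne_zero_of_pow_eq_one {c : ℂ} (hr : r ≠ 0) (hc : c ^ r = 1) : c ≠ 0 := by
  rintro rfl
  simp [zero_pow hr] at hc

lemma hypIJ_eq_ker {ℓ : ℕ} (i j : Fin ℓ) (n : ℕ) :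
    hypIJ r i j n = ker ((proj i : (Fin ℓ → ℂ) →ₗ[ℂ] ℂ) - (zeta r ^ n) • proj j) := rfl

lemma mem_interArr_iff (hr : r ≠ 0) {p K : ℕ} {H : Submodule ℂ (Fin p → ℂ)} :
    H ∈ interArr r p K ↔
      (∃ u : Fin p, (u : ℕ) < K ∧ H = ker (proj u)) ∨
        ∃ u v : Fin p, ∃ c : ℂ, u ≠ v ∧ c ^ r = 1 ∧ H = ker (proj u - c • proj v) := by
  have : NeZero r := ⟨hr⟩
  have hζ := isPrimitiveRoot_zeta hr
  simp only [interArr, Finset.mem_union, Finset.mem_image, Finset.mem_filter,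
    Finset.mem_univ, true_and]
  constructor
  · rintro (⟨u, hu, rfl⟩ | ⟨⟨u, v, n⟩, huv, rfl⟩)
    · exact Or.inl ⟨u, hu, rfl⟩
    · exact Or.inr ⟨u, v, _, huv.ne, by rw [← pow_mul, mul_comm, pow_mul, hζ.pow_eq_one,
        one_pow], rfl⟩
  · rintro (⟨u, hu, rfl⟩ | ⟨u, v, c, huv, hc, rfl⟩)
    · exact Or.inl ⟨u, hu, rfl⟩
    right
    rcases huv.lt_or_gt with huv | hvu
    · obtain ⟨n, hn, rfl⟩ := hζ.eq_pow_of_pow_eq_one hc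
      exact ⟨⟨u, v, ⟨n, hn⟩⟩, huv, rfl⟩
    · obtain ⟨n, hn, hcn⟩ := hζ.eq_pow_of_pow_eq_one (ξ := c⁻¹) (by rw [inv_pow, hc, inv_one])
      refine ⟨⟨v, u, ⟨n, hn⟩⟩, hvu, ?_⟩
      rw [ker_proj_sub_smul_proj_comm (ne_zero_of_pow_eq_one hr hc), ← hcn]
      rfl

lemma top_notMem_interArr (hr : r ≠ 0) (p K : ℕ) : ⊤ ∉ interArr r p K := by
  rw [mem_interArr_iff hr]
  rintro (⟨u, -, hu⟩ | ⟨u, v, c, huv, -, huvc⟩)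
  · exact ker_proj_ne_top u hu.symm
  · exact ker_proj_sub_smul_proj_ne_top huv c huvc.symm

end RootsOfUnity

section CoordMap

variable {K ι κ : Type*} [Field K]

def coordMap (w : κ → K) (τ : κ → ι) : (ι → K) →ₗ[K] (κ → K) :=
  LinearMap.pi fun a => w a • (proj (τ a) : (ι → K) →ₗ[K] K)

@[simp]
lemma coordMap_apply (w : κ → K) (τ : κ → ι) (y : ι → K) (a : κ) :
    coordMap w τ y a = w a * y (τ a) := rfl

lemma comap_coordMap_ker_proj {w : κ → K} (τ : κ → ι) {a : κ} (hw : w a ≠ 0) :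
    (ker (proj a : (κ → K) →ₗ[K] K)).comap (coordMap w τ) = ker (proj (τ a) : (ι → K) →ₗ[K] K) := by
  rw [← ker_comp, coordMap, proj_pi, ker_smul _ _ hw]

lemma comap_coordMap_ker_proj_sub_smul_proj (w : κ → K) (τ : κ → ι) (a b : κ) (c : K) :
    (ker ((proj a : (κ → K) →ₗ[K] K) - c • proj b)).comap (coordMap w τ)
      = ker (w a • (proj (τ a) : (ι → K) →ₗ[K] K) - (c * w b) • proj (τ b)) := by
  rw [← ker_comp, sub_comp, smul_comp, coordMap, proj_pi, proj_pi, smul_smul]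

end CoordMap

section PullbackOfInterArr

variable {r p q K K' : ℕ} {w : Fin q → ℂ} {τ : Fin q → Fin p}

lemma comap_coordMap_eq_top_or_mem_interArr (hr : r ≠ 0) (hw : ∀ a, w a ^ r = 1)
    (hK : ∀ a : Fin q, (a : ℕ) < K → (τ a : ℕ) < K')
    (hτ : ∀ a b, a ≠ b → τ a = τ b → (τ a : ℕ) < K')
    {H : Submodule ℂ (Fin q → ℂ)} (hH : H ∈ interArr r q K) :
    H.comap (coordMap w τ) = ⊤ ∨ H.comap (coordMap w τ) ∈ interArr r p K' := by
  have hw0 a : w a ≠ 0 := ne_zero_of_pow_eq_one hr (hw a)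
  rw [mem_interArr_iff hr] at hH ⊢
  rcases hH with ⟨a, ha, rfl⟩ | ⟨a, b, c, hab, hc, rfl⟩
  · rw [comap_coordMap_ker_proj τ (hw0 a)]
    exact Or.inr (Or.inl ⟨τ a, hK a ha, rfl⟩)
  rw [comap_coordMap_ker_proj_sub_smul_proj]
  by_cases hτab : τ a = τ b
  · rw [← hτab]
    by_cases hwab : w a = c * w b
    · simp [hwab]
    · rw [ker_smul_proj_sub_smul_proj_self hwab]
      exact Or.inr (Or.inl ⟨τ a, hτ a b hab hτab, rfl⟩)
  · rw [ker_smul_proj_sub_smul_proj (hw0 a)]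
    refine Or.inr (Or.inr ⟨τ a, τ b, _, hτab, ?_, rfl⟩)
    rw [div_pow, mul_pow, hc, hw, hw, one_mul, div_one]

lemma exists_comap_coordMap_eq (hr : r ≠ 0) {s : Fin p → Fin q} (hs : Function.Injective s)
    (hτs : ∀ u, τ (s u) = u) (hws : ∀ u, w (s u) = 1)
    (hK : ∀ u : Fin p, (u : ℕ) < K' →
      ∃ H ∈ interArr r q K, H.comap (coordMap w τ) = ker (proj u))
    {H' : Submodule ℂ (Fin p → ℂ)} (hH' : H' ∈ interArr r p K') :
    ∃ H ∈ interArr r q K, H.comap (coordMap w τ) = H' := by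
  rcases (mem_interArr_iff hr).1 hH' with ⟨u, hu, rfl⟩ | ⟨u, v, c, huv, hc, rfl⟩
  · exact hK u hu
  refine ⟨ker (proj (s u) - c • proj (s v)), ?_, ?_⟩
  · exact (mem_interArr_iff hr).2 (Or.inr ⟨s u, s v, c, hs.ne huv, hc, rfl⟩)
  · rw [comap_coordMap_ker_proj_sub_smul_proj, hτs, hτs, hws, hws, one_smul, mul_one]

end PullbackOfInterArr

section Restriction

variable {R V V' : Type*} [Ring R] [AddCommGroup V] [Module R V] [AddCommGroup V']
  [Module R V'] {T : V' →ₗ[R] V} {H₀ : Submodule R V}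

lemma image_comap_filter_eq (hT : range T = H₀) {A : Finset (Submodule R V)}
    {A' : Finset (Submodule R V')} (htop : ⊤ ∉ A')
    (hto : ∀ H ∈ A, H.comap T = ⊤ ∨ H.comap T ∈ A')
    (hfrom : ∀ H' ∈ A', ∃ H ∈ A, H.comap T = H') :
    (A.filter fun H => ¬ H₀ ≤ H).image (fun H => H.comap T) = A' := by
  ext H'
  simp only [Finset.mem_image, Finset.mem_filter, ← hT, range_le_iff_comap]
  constructor
  · rintro ⟨H, ⟨hH, hHtop⟩, rfl⟩
    exact (hto H hH).resolve_left hHtop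
  · intro hH'
    obtain ⟨H, hH, rfl⟩ := hfrom H' hH'
    exact ⟨H, ⟨hH, fun h => htop (h ▸ hH')⟩, rfl⟩

lemma map_inf_eq_comap (hT : range T = H₀) {π : V →ₗ[R] V'} (hπT : π ∘ₗ T = LinearMap.id)
    (H : Submodule R V) : (H ⊓ H₀).map π = H.comap T := by
  have hπT' : ∀ y, π (T y) = y := LinearMap.congr_fun hπT
  ext y
  simp only [Submodule.mem_map, Submodule.mem_inf, Submodule.mem_comap, ← hT, mem_range]
  constructor
  · rintro ⟨_, ⟨hv, y', rfl⟩, rfl⟩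
    rwa [hπT']
  · intro hy
    exact ⟨T y, ⟨hy, y, rfl⟩, hπT' y⟩

lemma exists_equiv_map_comap_subtype (hT : range T = H₀) (hinj : Function.Injective T) :
    ∃ e : H₀ ≃ₗ[R] V', ∀ H : Submodule R V, (H.comap H₀.subtype).map e.toLinearMap = H.comap T := by
  refine ⟨((LinearEquiv.ofInjective T hinj).trans (LinearEquiv.ofEq _ _ hT)).symm, fun H => ?_⟩
  rw [Submodule.map_equiv_eq_comap_symm, LinearEquiv.symm_symm, ← Submodule.comap_comp]
  rfl

end Restriction

section FinSuccAbove

variable {n : ℕ} (p : Fin (n + 1)) (d : Fin n)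

lemma val_succAbove_of_lt (h : (d : ℕ) < p) : (p.succAbove d : ℕ) = d := by
  rw [Fin.succAbove_of_castSucc_lt _ _ h, Fin.val_castSucc]

lemma val_le_val_succAbove : (d : ℕ) ≤ p.succAbove d := by
  rcases Fin.castSucc_lt_or_lt_succ p d with h | h
  · rw [Fin.succAbove_of_castSucc_lt _ _ h, Fin.val_castSucc]
  · rw [Fin.succAbove_of_lt_succ _ _ h, Fin.val_succ]
    omega

end FinSuccAbove

section GraphMap

variable {n : ℕ} (p : Fin (n + 1)) (c : ℂ) (t : Fin n) (σ : Equiv.Perm (Fin n))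

/-- Parametrisation of the hyperplane `x p = c * x (p.succAbove (σ⁻¹ t))` of `ℂ^{n+1}` by
`ℂ^n`: the coordinates other than `x p` are read off `y` after permuting by `σ`. -/
def graphMap : (Fin n → ℂ) →ₗ[ℂ] (Fin (n + 1) → ℂ) :=
  coordMap (Fin.insertNth p c 1) (Fin.insertNth p t σ)

def graphCoord : (Fin (n + 1) → ℂ) →ₗ[ℂ] (Fin n → ℂ) :=
  funLeft ℂ ℂ (p.succAbove ∘ σ.symm)

@[simp]
lemma graphMap_apply_self (y : Fin n → ℂ) : graphMap p c t σ y p = c * y t := by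
  simp [graphMap]

@[simp]
lemma graphMap_apply_succAbove (y : Fin n → ℂ) (d : Fin n) :
    graphMap p c t σ y (p.succAbove d) = y (σ d) := by
  simp [graphMap]

lemma comap_graphMap_ker_proj_succAbove (d : Fin n) :
    (ker (proj (p.succAbove d) : (Fin (n + 1) → ℂ) →ₗ[ℂ] ℂ)).comap (graphMap p c t σ)
      = ker (proj (σ d)) := by
  rw [graphMap, comap_coordMap_ker_proj _ (by simp), Fin.insertNth_apply_succAbove]

lemma graphCoord_comp_graphMap : graphCoord p σ ∘ₗ graphMap p c t σ = LinearMap.id := by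
  ext y d
  simp [graphCoord, funLeft]

lemma graphMap_injective : Function.Injective (graphMap p c t σ) :=
  Function.LeftInverse.injective (g := graphCoord p σ)
    (LinearMap.congr_fun (graphCoord_comp_graphMap p c t σ))

lemma range_graphMap {H₀ : Submodule ℂ (Fin (n + 1) → ℂ)}
    (hH₀ : ∀ v, v ∈ H₀ ↔ v p = c * v (p.succAbove (σ.symm t))) :
    range (graphMap p c t σ) = H₀ := by
  ext v
  rw [mem_range, hH₀]
  constructor
  · rintro ⟨y, rfl⟩
    simp
  · intro hv
    refine ⟨graphCoord p σ v, funext fun a => Fin.succAboveCases p ?_ (fun d => ?_) a⟩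
    · simp [graphCoord, funLeft, hv]
    · simp [graphCoord, funLeft]

lemma image_comap_graphMap_interArr {r K K' : ℕ} (hr : r ≠ 0) (hc : c ^ r = 1)
    (ht : (t : ℕ) < K') (hp : K ≤ (p : ℕ))
    (hK : ∀ d : Fin n, ((p.succAbove d : Fin (n + 1)) : ℕ) < K → (σ d : ℕ) < K')
    (hC : ∀ u : Fin n, (u : ℕ) < K' →
      ∃ H ∈ interArr r (n + 1) K, H.comap (graphMap p c t σ) = ker (proj u))
    {H₀ : Submodule ℂ (Fin (n + 1) → ℂ)} (hH₀ : range (graphMap p c t σ) = H₀) :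
    ((interArr r (n + 1) K).filter fun H => ¬ H₀ ≤ H).image
        (fun H => H.comap (graphMap p c t σ)) = interArr r n K' := by
  have hw : ∀ a, (Fin.insertNth p c 1 : Fin (n + 1) → ℂ) a ^ r = 1 :=
    Fin.succAboveCases p (by simpa using hc) (by simp)
  set τ : Fin (n + 1) → Fin n := Fin.insertNth p t σ
  have hKτ : ∀ a : Fin (n + 1), (a : ℕ) < K → (τ a : ℕ) < K' :=
    Fin.succAboveCases p (fun h => absurd h (by omega)) (fun d hd => by simpa [τ] using hK d hd)
  have hτ : ∀ a b : Fin (n + 1), a ≠ b → τ a = τ b → (τ a : ℕ) < K' := by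
    intro a b hab hτab
    rcases eq_or_ne a p with rfl | hap
    · simpa [τ] using ht
    rcases eq_or_ne b p with rfl | hbp
    · simpa [hτab, τ] using ht
    obtain ⟨d, rfl⟩ := Fin.exists_succAbove_eq hap
    obtain ⟨d', rfl⟩ := Fin.exists_succAbove_eq hbp
    simp only [τ, Fin.insertNth_apply_succAbove, EmbeddingLike.apply_eq_iff_eq] at hτab
    exact absurd (congrArg _ hτab) hab
  refine image_comap_filter_eq hH₀ (top_notMem_interArr hr _ _)
    (fun H hH => comap_coordMap_eq_top_or_mem_interArr hr hw hKτ hτ hH)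
    (fun H' hH' => exists_comap_coordMap_eq hr (s := p.succAbove ∘ σ.symm)
      ((Fin.succAbove_right_injective).comp σ.symm.injective) (by simp) (by simp) hC hH')

end GraphMap

section Restrictions

variable {r m k : ℕ} {i j : Fin (m + 2)}

lemma mem_hypIJ_one_iff {v : Fin (m + 2) → ℂ} :
    v ∈ hypIJ r i j 1 ↔ v i = zeta r * v j := by
  simp [hypIJ_eq_ker, sub_eq_zero]

lemma image_map_inf_hypIJ_interArr (hr : r ≠ 0) (hij : i < j) (hik : (i : ℕ) < k)
    (hkj : k ≤ (j : ℕ)) :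
    ((interArr r (m + 2) k).filter fun H => ¬ hypIJ r i j 1 ≤ H).image
        (fun H => (H ⊓ hypIJ r i j 1).map
          (funLeft ℂ ℂ (Fin.succAbove j) : (Fin (m + 2) → ℂ) →ₗ[ℂ] (Fin (m + 1) → ℂ)))
      = interArr r (m + 1) k := by
  set i' := i.castPred (Fin.ne_last_of_lt hij)
  have hi' : j.succAbove i' = i := Fin.succAbove_castPred_of_lt j i hij
  have hζ : zeta r ≠ 0 := ne_zero_of_pow_eq_one hr (isPrimitiveRoot_zeta hr).pow_eq_one
  have hrange : range (graphMap j (zeta r)⁻¹ i' (Equiv.refl _)) = hypIJ r i j 1 := by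
    refine range_graphMap _ _ _ _ fun v => ?_
    rw [Equiv.refl_symm, Equiv.refl_apply, hi', mem_hypIJ_one_iff, eq_inv_mul_iff_mul_eq₀ hζ,
      eq_comm]
  have hmap := map_inf_eq_comap hrange (graphCoord_comp_graphMap _ _ _ _)
  simp only [graphCoord, Equiv.refl_symm, Equiv.coe_refl, Function.comp_id] at hmap
  simp only [hmap]
  refine image_comap_graphMap_interArr _ _ _ _ hr
    (by rw [inv_pow, (isPrimitiveRoot_zeta hr).pow_eq_one, inv_one]) (by simpa [i'] using hik)
    hkj (fun d hd => (val_le_val_succAbove j d).trans_lt hd) (fun u hu => ?_) hrange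
  refine ⟨ker (proj (j.succAbove u)), (mem_interArr_iff hr).2 (Or.inl ⟨_, ?_, rfl⟩),
    comap_graphMap_ker_proj_succAbove _ _ _ _ _⟩
  rwa [val_succAbove_of_lt _ _ (by omega)]

lemma exists_restrictTo_hypIJ_interArr (hr : 2 ≤ r) (hij : i < j) (hki : k ≤ (i : ℕ)) :
    ∃ e : hypIJ r i j 1 ≃ₗ[ℂ] (Fin (m + 1) → ℂ),
      restrictTo (interArr r (m + 2) k) (hypIJ r i j 1) e = interArr r (m + 1) (k + 1) := by
  have hr0 : r ≠ 0 := by omega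
  set j' := j.pred (Fin.ne_zero_of_lt hij)
  have hj' : i.succAbove j' = j := Fin.succAbove_pred_of_lt i j hij
  have hkj' : k ≤ (j' : ℕ) := by simp only [j', Fin.val_pred]; omega
  set k' : Fin (m + 1) := ⟨k, by omega⟩
  set σ := Equiv.swap k' j'
  have hσ : ∀ d : Fin (m + 1), (d : ℕ) < k → σ d = d := fun d hd =>
    Equiv.swap_apply_of_ne_of_ne (Fin.ne_of_val_ne (show (d : ℕ) ≠ k by omega))
      (Fin.ne_of_val_ne (by omega))
  have hrange : range (graphMap i (zeta r) k' σ) = hypIJ r i j 1 := by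
    refine range_graphMap _ _ _ _ fun v => ?_
    rw [Equiv.symm_swap, Equiv.swap_apply_left, hj', mem_hypIJ_one_iff]
  obtain ⟨e, he⟩ := exists_equiv_map_comap_subtype hrange (graphMap_injective _ _ _ _)
  refine ⟨e, ?_⟩
  simp only [restrictTo, he]
  refine image_comap_graphMap_interArr _ _ _ _ hr0 (isPrimitiveRoot_zeta hr0).pow_eq_one
    (by simp [k']) hki (fun d hd => ?_) (fun u hu => ?_) hrange
  · have hdk := (val_le_val_succAbove i d).trans_lt hd
    rw [hσ d hdk]
    omega
  rcases Nat.lt_succ_iff_lt_or_eq.1 hu with hu | hu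
  · refine ⟨ker (proj (i.succAbove u)), (mem_interArr_iff hr0).2 (Or.inl ⟨_, ?_, rfl⟩), ?_⟩
    · rwa [val_succAbove_of_lt _ _ (by omega)]
    · rw [comap_graphMap_ker_proj_succAbove, hσ u hu]
  · refine ⟨hypIJ r i j 0, (mem_interArr_iff hr0).2 (Or.inr ⟨i, j, 1, hij.ne, one_pow _, ?_⟩), ?_⟩
    · simp [hypIJ_eq_ker]
    rw [hypIJ_eq_ker, graphMap, comap_coordMap_ker_proj_sub_smul_proj, ← hj']
    simp only [Fin.insertNth_apply_same, Fin.insertNth_apply_succAbove, σ, Equiv.swap_apply_right,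
      pow_zero, Pi.one_apply, mul_one]
    rw [ker_smul_proj_sub_smul_proj_self (zeta_ne_one hr), (Fin.ext hu : u = k')]

end Restrictions

end ArrPaper

open ArrPaper in
theorem stmt10_general (r m k : ℕ) (hr : 2 ≤ r) :
    (∀ i j : Fin (m + 2), i < j → (i : ℕ) < k → k ≤ (j : ℕ) →
      ((interArr r (m + 2) k).filter fun H => ¬ hypIJ r i j 1 ≤ H).image
          (fun H => (H ⊓ hypIJ r i j 1).map
            (LinearMap.funLeft ℂ ℂ (Fin.succAbove j) :
              (Fin (m + 2) → ℂ) →ₗ[ℂ] (Fin (m + 1) → ℂ)))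
        = interArr r (m + 1) k) ∧
    (∀ i j : Fin (m + 2), i < j → k ≤ (i : ℕ) →
      ∃ e : hypIJ r i j 1 ≃ₗ[ℂ] (Fin (m + 1) → ℂ),
        restrictTo (interArr r (m + 2) k) (hypIJ r i j 1) e
          = interArr r (m + 1) (k + 1)) :=
  ⟨fun _ _ hij hik hkj => image_map_inf_hypIJ_interArr (by omega) hij hik hkj,
    fun _ _ hij hki => exists_restrictTo_hypIJ_interArr hr hij hki⟩

open ArrPaper in
/-- For `1 ≤ k ≤ ℓ - 1`: if `i ≤ k < j` (1-based), the restriction of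
`A^k_ℓ(r)` to `ker (x_i - ζ x_j)` (via the projection forgetting `x_j`) is
`A^k_{ℓ-1}(r)`; and if `k < i < j`, the restriction of `A^k_ℓ(r)` to
`ker (x_i - ζ x_j)` is isomorphic to `A^{k+1}_{ℓ-1}(r)`.
(Here `ℓ = m + 2`, indices 0-based.) -/
theorem stmt10 (r m k : ℕ) (hr : 2 ≤ r) (hk1 : 1 ≤ k) (hk2 : k ≤ m + 1) :
    (∀ i j : Fin (m + 2), i < j → (i : ℕ) < k → k ≤ (j : ℕ) →
      ((interArr r (m + 2) k).filter fun H => ¬ hypIJ r i j 1 ≤ H).image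
          (fun H => (H ⊓ hypIJ r i j 1).map
            (LinearMap.funLeft ℂ ℂ (Fin.succAbove j) :
              (Fin (m + 2) → ℂ) →ₗ[ℂ] (Fin (m + 1) → ℂ)))
        = interArr r (m + 1) k) ∧
    (∀ i j : Fin (m + 2), i < j → k ≤ (i : ℕ) →
      ∃ e : hypIJ r i j 1 ≃ₗ[ℂ] (Fin (m + 1) → ℂ),
        restrictTo (interArr r (m + 2) k) (hypIJ r i j 1) e
          = interArr r (m + 1) (k + 1)) :=
  stmt10_general r m k hr
end
end

section
/- For 1 ≤ n ≤ p, ℓ = p + n, r ≥ 3, W = G(r,r,ℓ), and X = ∩_{i=1}^{n} ker(x_{2i−1} − ζ x_{2i}) in the intersection lattice of the reflection arrangement A(W), one has dim X = p and the restricted arrangement A(W)^X is isomorphic to A^n_p(r). -/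
open scoped Classical

noncomputable section

namespace Stmt17Aux
open ArrPaper

lemma zeta_prim (r : ℕ) (hr : r ≠ 0) : IsPrimitiveRoot (zeta r) r :=
  Complex.isPrimitiveRoot_exp r hr

variable {r p n : ℕ}

/-- index map `Fin (p+n) → Fin p` -/
def Kmap (p n : ℕ) (hnp : n ≤ p) (k : Fin (p + n)) : Fin p :=
  if _h : (k : ℕ) < 2 * n then ⟨(k : ℕ) / 2, by omega⟩
  else ⟨(k : ℕ) - n, by have := k.isLt; omega⟩

lemma Kmap_val (hnp : n ≤ p) (k : Fin (p + n)) :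
    ((k : ℕ) < 2 * n ∧ ((Kmap p n hnp k : ℕ) = (k : ℕ) / 2)) ∨
    (¬ (k : ℕ) < 2 * n ∧ (Kmap p n hnp k : ℕ) = (k : ℕ) - n) := by
  unfold Kmap; split <;> simp_all

lemma Kmap_eq (hnp : n ≤ p) (k : Fin (p + n)) (a : Fin p)
    (h : ((k : ℕ) < 2 * n ∧ (a : ℕ) = (k : ℕ) / 2) ∨ (2 * n ≤ (k : ℕ) ∧ (a : ℕ) = (k : ℕ) - n)) :
    Kmap p n hnp k = a := by
  have := Kmap_val hnp k
  apply Fin.ext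
  omega

def Gcoef (r p n : ℕ) (k : Fin (p + n)) : ℂ :=
  if (k : ℕ) < 2 * n ∧ (k : ℕ) % 2 = 0 then zeta r else 1

lemma Gcoef_zeta (k : Fin (p + n)) (h1 : (k : ℕ) < 2 * n) (h2 : (k : ℕ) % 2 = 0) :
    Gcoef r p n k = zeta r := if_pos ⟨h1, h2⟩

lemma Gcoef_one (k : Fin (p + n)) (h : ¬ ((k : ℕ) < 2 * n ∧ (k : ℕ) % 2 = 0)) :
    Gcoef r p n k = 1 := if_neg h

def gmap (r p n : ℕ) (hnp : n ≤ p) : (Fin p → ℂ) →ₗ[ℂ] (Fin (p + n) → ℂ) where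
  toFun y k := Gcoef r p n k * y (Kmap p n hnp k)
  map_add' y z := by funext k; simp [mul_add]
  map_smul' c y := by funext k; simp; ring

lemma gmap_apply (hnp : n ≤ p) (y : Fin p → ℂ) (k : Fin (p + n)) :
    gmap r p n hnp y k = Gcoef r p n k * y (Kmap p n hnp k) := rfl

def fmap (p n : ℕ) (hnp : n ≤ p) : (Fin (p + n) → ℂ) →ₗ[ℂ] (Fin p → ℂ) where
  toFun x j := if _h : (j : ℕ) < n then x ⟨2 * (j : ℕ) + 1, by omega⟩
    else x ⟨(j : ℕ) + n, by have := j.isLt; omega⟩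
  map_add' x z := by funext j; by_cases h : (j : ℕ) < n <;> simp [h]
  map_smul' c x := by funext j; by_cases h : (j : ℕ) < n <;> simp [h]

def Xval (r p n : ℕ) (hnp : n ≤ p) : Submodule ℂ (Fin (p + n) → ℂ) :=
  ⨅ i : Fin n, hypIJ r (⟨2 * (i : ℕ), by have := i.isLt; omega⟩ : Fin (p + n))
    (⟨2 * (i : ℕ) + 1, by have := i.isLt; omega⟩ : Fin (p + n)) 1

lemma hypIJ_def {ℓ : ℕ} (r : ℕ) (i j : Fin ℓ) (m : ℕ) :
    hypIJ r i j m = LinearMap.ker ((LinearMap.proj i : (Fin ℓ → ℂ) →ₗ[ℂ] ℂ)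
      - (zeta r ^ m) • (LinearMap.proj j : (Fin ℓ → ℂ) →ₗ[ℂ] ℂ)) := rfl

lemma mem_Xval (hnp : n ≤ p) (x : Fin (p + n) → ℂ) :
    x ∈ Xval r p n hnp ↔ ∀ i : Fin n,
      x ⟨2 * (i : ℕ), by have := i.isLt; omega⟩
        = zeta r * x ⟨2 * (i : ℕ) + 1, by have := i.isLt; omega⟩ := by
  simp [Xval, Submodule.mem_iInf, hypIJ, LinearMap.mem_ker, LinearMap.sub_apply,
    LinearMap.smul_apply, LinearMap.proj_apply, sub_eq_zero, smul_eq_mul, pow_one]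

lemma gmap_mem (hnp : n ≤ p) (y : Fin p → ℂ) : gmap r p n hnp y ∈ Xval r p n hnp := by
  rw [mem_Xval]
  intro i
  have hi := i.isLt
  rw [gmap_apply, gmap_apply,
    Gcoef_zeta _ (by first | omega | (simp only [Fin.val_mk]; omega) | (simp; omega)) (by first | omega | (simp only [Fin.val_mk]; omega) | (simp; omega)),
    Gcoef_one _ (by first | omega | (simp only [Fin.val_mk]; omega) | (simp; omega)),
    Kmap_eq hnp _ ⟨(i : ℕ), by omega⟩ (by first | omega | (simp only [Fin.val_mk]; omega) | (simp; omega)),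
    Kmap_eq hnp _ ⟨(i : ℕ), by omega⟩ (by first | omega | (simp only [Fin.val_mk]; omega) | (simp; omega))]
  ring

lemma fg (hnp : n ≤ p) (y : Fin p → ℂ) : fmap p n hnp (gmap r p n hnp y) = y := by
  funext j
  show (if _h : (j : ℕ) < n then gmap r p n hnp y ⟨2 * (j : ℕ) + 1, by omega⟩
    else gmap r p n hnp y ⟨(j : ℕ) + n, by have := j.isLt; omega⟩) = y j
  by_cases h : (j : ℕ) < n
  · rw [dif_pos h, gmap_apply, Gcoef_one _ (by first | omega | (simp only [Fin.val_mk]; omega) | (simp; omega)),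
      Kmap_eq hnp _ j (by first | omega | (simp only [Fin.val_mk]; omega) | (simp; omega))]
    ring
  · rw [dif_neg h, gmap_apply, Gcoef_one _ (by first | omega | (simp only [Fin.val_mk]; omega) | (simp; omega)),
      Kmap_eq hnp _ j (by first | omega | (simp only [Fin.val_mk]; omega) | (simp; omega))]
    ring

lemma gf (hnp : n ≤ p) (x : Fin (p + n) → ℂ) (hx : x ∈ Xval r p n hnp) :
    gmap r p n hnp (fmap p n hnp x) = x := by
  have hmem := (mem_Xval hnp x).1 hx
  funext k
  have hk := k.isLt
  rw [gmap_apply]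
  have hfapp : ∀ (j : Fin p), fmap p n hnp x j =
      (if _h : (j : ℕ) < n then x ⟨2 * (j : ℕ) + 1, by omega⟩
        else x ⟨(j : ℕ) + n, by have := j.isLt; omega⟩) := fun _ => rfl
  rcases Nat.lt_or_ge (k : ℕ) (2 * n) with h2n | h2n
  · by_cases he : (k : ℕ) % 2 = 0
    · rw [Gcoef_zeta _ h2n he, Kmap_eq hnp _ ⟨(k : ℕ) / 2, by omega⟩ (by first | omega | (simp only [Fin.val_mk]; omega) | (simp; omega)),
        hfapp, dif_pos (show ((⟨(k : ℕ) / 2, by omega⟩ : Fin p) : ℕ) < n by first | omega | (simp only [Fin.val_mk]; omega) | (simp; omega))]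
      have key := hmem ⟨(k : ℕ) / 2, by omega⟩
      simp only [Fin.val_mk] at key ⊢
      rw [show (⟨2 * ((k : ℕ) / 2), by omega⟩ : Fin (p + n)) = k from Fin.ext (by first | omega | (simp only [Fin.val_mk]; omega) | (simp; omega))] at key
      rw [← key]
    · rw [Gcoef_one _ (by omega), Kmap_eq hnp _ ⟨(k : ℕ) / 2, by omega⟩ (by first | omega | (simp only [Fin.val_mk]; omega) | (simp; omega)),
        hfapp, dif_pos (show ((⟨(k : ℕ) / 2, by omega⟩ : Fin p) : ℕ) < n by first | omega | (simp only [Fin.val_mk]; omega) | (simp; omega))]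
      simp only [Fin.val_mk]
      rw [show (⟨2 * ((k : ℕ) / 2) + 1, by omega⟩ : Fin (p + n)) = k from Fin.ext (by first | omega | (simp only [Fin.val_mk]; omega) | (simp; omega))]
      ring
  · rw [Gcoef_one _ (by omega), Kmap_eq hnp _ ⟨(k : ℕ) - n, by omega⟩ (by first | omega | (simp only [Fin.val_mk]; omega) | (simp; omega)),
      hfapp, dif_neg (show ¬ ((⟨(k : ℕ) - n, by omega⟩ : Fin p) : ℕ) < n by first | omega | (simp only [Fin.val_mk]; omega) | (simp; omega))]
    simp only [Fin.val_mk]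
    rw [show (⟨(k : ℕ) - n + n, by omega⟩ : Fin (p + n)) = k from Fin.ext (by first | omega | (simp only [Fin.val_mk]; omega) | (simp; omega))]
    ring

def equivE (r p n : ℕ) (hnp : n ≤ p) : (Xval r p n hnp) ≃ₗ[ℂ] (Fin p → ℂ) :=
  LinearEquiv.ofLinear ((fmap p n hnp) ∘ₗ (Xval r p n hnp).subtype)
    (LinearMap.codRestrict _ (gmap r p n hnp) (gmap_mem hnp))
    (by apply LinearMap.ext; intro y; exact fg hnp y)
    (by apply LinearMap.ext; intro x; exact Subtype.ext (gf hnp x x.2))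

lemma subtype_symm (hnp : n ≤ p) :
    (Xval r p n hnp).subtype ∘ₗ (equivE r p n hnp).symm.toLinearMap = gmap r p n hnp := rfl

lemma map_comap_ker {ℓ q : ℕ} (X : Submodule ℂ (Fin ℓ → ℂ)) (e : X ≃ₗ[ℂ] (Fin q → ℂ))
    (φ : (Fin ℓ → ℂ) →ₗ[ℂ] ℂ) :
    ((LinearMap.ker φ).comap X.subtype).map e.toLinearMap
      = LinearMap.ker (φ ∘ₗ (X.subtype ∘ₗ e.symm.toLinearMap)) := by
  ext y
  simp only [Submodule.mem_map, Submodule.mem_comap, LinearMap.mem_ker, LinearMap.comp_apply]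
  constructor
  · rintro ⟨x, hx, rfl⟩
    simpa [LinearEquiv.coe_coe] using hx
  · intro hy
    exact ⟨e.symm y, hy, by simp⟩

lemma Xle_iff (hnp : n ≤ p) (φ : (Fin (p + n) → ℂ) →ₗ[ℂ] ℂ) :
    Xval r p n hnp ≤ LinearMap.ker φ ↔ φ ∘ₗ gmap r p n hnp = 0 := by
  constructor
  · intro h
    apply LinearMap.ext; intro y
    simpa using h (gmap_mem hnp y)
  · intro h x hx
    rw [LinearMap.mem_ker, ← gf hnp x hx]
    simpa using LinearMap.congr_fun h (fmap p n hnp x)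

lemma ker_pair {q : ℕ} (ψ : (Fin q → ℂ) →ₗ[ℂ] ℂ) (a b : Fin q) (u w : ℂ) (hu : u ≠ 0)
    (hψ : ∀ y, ψ y = u * y a - (u * w) * y b) :
    LinearMap.ker ψ = LinearMap.ker ((LinearMap.proj a : (Fin q → ℂ) →ₗ[ℂ] ℂ)
      - w • (LinearMap.proj b : (Fin q → ℂ) →ₗ[ℂ] ℂ)) := by
  ext y
  simp only [LinearMap.mem_ker, hψ, LinearMap.sub_apply, LinearMap.smul_apply,
    LinearMap.proj_apply, smul_eq_mul]
  rw [show u * y a - u * w * y b = u * (y a - w * y b) by ring, mul_eq_zero]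
  simp [hu]

lemma ker_coord {q : ℕ} (ψ : (Fin q → ℂ) →ₗ[ℂ] ℂ) (a : Fin q) (u : ℂ) (hu : u ≠ 0)
    (hψ : ∀ y, ψ y = u * y a) :
    LinearMap.ker ψ = LinearMap.ker (LinearMap.proj a : (Fin q → ℂ) →ₗ[ℂ] ℂ) := by
  ext y
  simp only [LinearMap.mem_ker, hψ, LinearMap.proj_apply, mul_eq_zero]
  simp [hu]

lemma comp_gmap_apply (hnp : n ≤ p) (i j : Fin (p + n)) (c : ℂ) (y : Fin p → ℂ) :
    (((LinearMap.proj i : (Fin (p + n) → ℂ) →ₗ[ℂ] ℂ)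
        - c • (LinearMap.proj j : (Fin (p + n) → ℂ) →ₗ[ℂ] ℂ)) ∘ₗ gmap r p n hnp) y
      = Gcoef r p n i * y (Kmap p n hnp i) - c * (Gcoef r p n j * y (Kmap p n hnp j)) := by
  simp [gmap_apply]

set_option maxHeartbeats 8000000 in
theorem main_restrict (r p n : ℕ) (hr : 3 ≤ r) (hn1 : 1 ≤ n) (hnp : n ≤ p) :
    restrictTo (interArr r (p + n) 0) (Xval r p n hnp) (equivE r p n hnp) = interArr r p n := by
  have hr0 : r ≠ 0 := by omega
  have hprim := zeta_prim r hr0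
  have hzr : zeta r ^ r = 1 := hprim.pow_eq_one
  have hz0 : zeta r ≠ 0 := hprim.ne_zero hr0
  have hz1 : zeta r ≠ 1 := hprim.ne_one (by omega)
  have hpow : ∀ x : ℕ, zeta r ^ (x % r) = zeta r ^ x := by
    intro x
    conv_rhs => rw [← Nat.mod_add_div x r]
    rw [pow_add, pow_mul, hzr, one_pow, mul_one]
  have hA : interArr r (p + n) 0 =
      ((Finset.univ : Finset (Fin (p+n) × Fin (p+n) × Fin r)).filter fun q => q.1 < q.2.1).image
        fun q => hypIJ r q.1 q.2.1 (q.2.2 : ℕ) := by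
    simp [interArr]
  ext H
  constructor
  · intro hH
    obtain ⟨H', hH', rfl⟩ := Finset.mem_image.1 hH
    obtain ⟨hH'A, hHle⟩ := Finset.mem_filter.1 hH'
    rw [hA] at hH'A
    obtain ⟨⟨i, j, m⟩, hq, rfl⟩ := Finset.mem_image.1 hH'A
    dsimp only at hHle ⊢
    have hij : (i : ℕ) < (j : ℕ) := (Finset.mem_filter.1 hq).2
    have hiv := i.isLt
    have hjv := j.isLt
    have hKi := Kmap_val hnp i
    have hKj := Kmap_val hnp j
    rw [hypIJ_def, map_comap_ker, subtype_symm]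
    by_cases hab : (Kmap p n hnp i : ℕ) = (Kmap p n hnp j : ℕ)
    · -- same block : i even, j = i+1, i < 2n
      have hfacts : (i : ℕ) < 2 * n ∧ (j : ℕ) = (i : ℕ) + 1 ∧ (i : ℕ) % 2 = 0 := by omega
      have hGi : Gcoef r p n i = zeta r := Gcoef_zeta _ (by omega) (by omega)
      have hGj : Gcoef r p n j = 1 := Gcoef_one _ (by omega)
      have hKij : Kmap p n hnp j = Kmap p n hnp i := Fin.ext (by omega)
      have hne : zeta r ^ (m : ℕ) ≠ zeta r := by
        intro hzm
        apply hHle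
        rw [hypIJ_def, Xle_iff]
        apply LinearMap.ext; intro y
        rw [comp_gmap_apply, hGi, hGj, hKij, hzm]
        simp only [LinearMap.zero_apply]
        ring
      rw [ker_coord _ (Kmap p n hnp i) (zeta r - zeta r ^ (m : ℕ))
        (sub_ne_zero.2 (Ne.symm hne))
        (fun y => by rw [comp_gmap_apply, hGi, hGj, hKij]; ring)]
      apply Finset.mem_union_left
      apply Finset.mem_image.2
      exact ⟨Kmap p n hnp i, Finset.mem_filter.2 ⟨Finset.mem_univ _, by omega⟩, rfl⟩
    · -- different blocks
      have hab' : (Kmap p n hnp i : ℕ) < (Kmap p n hnp j : ℕ) := by omega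
      have hGi' : ∃ ei : ℕ, ei ≤ 1 ∧ Gcoef r p n i = zeta r ^ ei := by
        unfold Gcoef; split
        · exact ⟨1, le_refl 1, (pow_one _).symm⟩
        · exact ⟨0, by omega, (pow_zero _).symm⟩
      have hGj' : ∃ ej : ℕ, ej ≤ 1 ∧ Gcoef r p n j = zeta r ^ ej := by
        unfold Gcoef; split
        · exact ⟨1, le_refl 1, (pow_one _).symm⟩
        · exact ⟨0, by omega, (pow_zero _).symm⟩
      obtain ⟨ei, hei1, hGi⟩ := hGi'
      obtain ⟨ej, hej1, hGj⟩ := hGj'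
      have hm'lt : ((m : ℕ) + ej + ei * (r - 1)) % r < r := Nat.mod_lt _ (by omega)
      have e2 : ei + ((m : ℕ) + ej + ei * (r - 1)) = ((m : ℕ) + ej) + r * ei := by
        rcases Nat.le_one_iff_eq_zero_or_eq_one.1 hei1 with rfl | rfl <;> omega
      have key : zeta r ^ (m : ℕ) * zeta r ^ ej
          = zeta r ^ ei * zeta r ^ (((m : ℕ) + ej + ei * (r - 1)) % r) := by
        calc zeta r ^ (m : ℕ) * zeta r ^ ej = zeta r ^ ((m : ℕ) + ej) := (pow_add _ _ _).symm
          _ = zeta r ^ ((m : ℕ) + ej) * (zeta r ^ r) ^ ei := by rw [hzr, one_pow, mul_one]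
          _ = zeta r ^ (((m : ℕ) + ej) + r * ei) := by rw [← pow_mul, ← pow_add]
          _ = zeta r ^ (ei + ((m : ℕ) + ej + ei * (r - 1))) := by rw [e2]
          _ = zeta r ^ ei * zeta r ^ ((m : ℕ) + ej + ei * (r - 1)) := pow_add _ _ _
          _ = zeta r ^ ei * zeta r ^ (((m : ℕ) + ej + ei * (r - 1)) % r) := by rw [hpow]
      rw [ker_pair _ (Kmap p n hnp i) (Kmap p n hnp j) (zeta r ^ ei)
        (zeta r ^ (((m : ℕ) + ej + ei * (r - 1)) % r)) (pow_ne_zero _ hz0)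
        (fun y => by rw [comp_gmap_apply, hGi, hGj, ← mul_assoc, key, mul_assoc])]
      apply Finset.mem_union_right
      apply Finset.mem_image.2
      refine ⟨⟨Kmap p n hnp i, Kmap p n hnp j, ⟨((m : ℕ) + ej + ei * (r - 1)) % r, hm'lt⟩⟩,
        Finset.mem_filter.2 ⟨Finset.mem_univ _, by dsimp only; exact Fin.lt_def.mpr hab'⟩, ?_⟩
      rw [hypIJ_def]
  · intro hH
    rcases Finset.mem_union.1 hH with h | h
    · -- coordinate hyperplane ker proj a, a < n
      obtain ⟨a, ha, rfl⟩ := Finset.mem_image.1 h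
      have han : (a : ℕ) < n := (Finset.mem_filter.1 ha).2
      have hav := a.isLt
      set i : Fin (p + n) := ⟨2 * (a : ℕ), by omega⟩ with hidef
      set j : Fin (p + n) := ⟨2 * (a : ℕ) + 1, by omega⟩ with hjdef
      have hival : (i : ℕ) = 2 * (a : ℕ) := by rw [hidef]
      have hjval : (j : ℕ) = 2 * (a : ℕ) + 1 := by rw [hjdef]
      have hKi : Kmap p n hnp i = a := Kmap_eq hnp i a (by omega)
      have hKj : Kmap p n hnp j = a := Kmap_eq hnp j a (by omega)
      have hGi : Gcoef r p n i = zeta r := Gcoef_zeta i (by omega) (by omega)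
      have hGj : Gcoef r p n j = 1 := Gcoef_one j (by omega)
      apply Finset.mem_image.2
      refine ⟨hypIJ r i j 0, Finset.mem_filter.2 ⟨?_, ?_⟩, ?_⟩
      · rw [hA]
        exact Finset.mem_image.2 ⟨⟨i, j, ⟨0, by omega⟩⟩,
          Finset.mem_filter.2 ⟨Finset.mem_univ _, by dsimp only; rw [Fin.lt_def]; omega⟩, rfl⟩
      · intro hle
        rw [hypIJ_def, Xle_iff] at hle
        have hthis := LinearMap.congr_fun hle (Pi.single a 1)
        rw [comp_gmap_apply, hGi, hGj, hKi, hKj] at hthis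
        simp only [pow_zero, one_mul, Pi.single_eq_same, mul_one,
          LinearMap.zero_apply] at hthis
        exact hz1 (by linear_combination hthis)
      · rw [hypIJ_def, map_comap_ker, subtype_symm,
          ker_coord _ a (zeta r - 1) (sub_ne_zero.2 hz1)
            (fun y => by
              rw [comp_gmap_apply, hGi, hGj, hKi, hKj, pow_zero]
              ring)]
    · -- hypIJ r a b m, a < b
      obtain ⟨⟨a, b, m⟩, hq, rfl⟩ := Finset.mem_image.1 h
      dsimp only
      have hab : (a : ℕ) < (b : ℕ) := (Finset.mem_filter.1 hq).2
      have hav := a.isLt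
      have hbv := b.isLt
      set i : Fin (p + n) := ⟨if (a : ℕ) < n then 2 * (a : ℕ) + 1 else (a : ℕ) + n,
        by split <;> omega⟩ with hidef
      set j : Fin (p + n) := ⟨if (b : ℕ) < n then 2 * (b : ℕ) + 1 else (b : ℕ) + n,
        by split <;> omega⟩ with hjdef
      have hival : ((i : ℕ) = 2 * (a : ℕ) + 1 ∧ (a : ℕ) < n)
          ∨ ((i : ℕ) = (a : ℕ) + n ∧ n ≤ (a : ℕ)) := by
        by_cases h' : (a : ℕ) < n
        · exact Or.inl ⟨by rw [hidef]; simp only [Fin.val_mk]; rw [if_pos h'], h'⟩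
        · exact Or.inr ⟨by rw [hidef]; simp only [Fin.val_mk]; rw [if_neg h'], by omega⟩
      have hjval : ((j : ℕ) = 2 * (b : ℕ) + 1 ∧ (b : ℕ) < n)
          ∨ ((j : ℕ) = (b : ℕ) + n ∧ n ≤ (b : ℕ)) := by
        by_cases h' : (b : ℕ) < n
        · exact Or.inl ⟨by rw [hjdef]; simp only [Fin.val_mk]; rw [if_pos h'], h'⟩
        · exact Or.inr ⟨by rw [hjdef]; simp only [Fin.val_mk]; rw [if_neg h'], by omega⟩
      have hKi : Kmap p n hnp i = a := Kmap_eq hnp i a (by omega)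
      have hKj : Kmap p n hnp j = b := Kmap_eq hnp j b (by omega)
      have hGi : Gcoef r p n i = 1 := Gcoef_one i (by omega)
      have hGj : Gcoef r p n j = 1 := Gcoef_one j (by omega)
      apply Finset.mem_image.2
      refine ⟨hypIJ r i j (m : ℕ), Finset.mem_filter.2 ⟨?_, ?_⟩, ?_⟩
      · rw [hA]
        exact Finset.mem_image.2 ⟨⟨i, j, m⟩,
          Finset.mem_filter.2 ⟨Finset.mem_univ _, by dsimp only; rw [Fin.lt_def]; omega⟩, rfl⟩
      · intro hle
        rw [hypIJ_def, Xle_iff] at hle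
        have := LinearMap.congr_fun hle (Pi.single a 1)
        rw [comp_gmap_apply, hGi, hGj, hKi, hKj] at this
        have hba : b ≠ a := by intro hba; rw [hba] at hab; omega
        rw [Pi.single_eq_same, Pi.single_eq_of_ne hba] at this
        simp only [mul_one, mul_zero, sub_zero, one_mul, LinearMap.zero_apply] at this
        exact one_ne_zero this
      · rw [hypIJ_def, map_comap_ker, subtype_symm,
          ker_pair _ a b 1 (zeta r ^ (m : ℕ)) one_ne_zero
            (fun y => by rw [comp_gmap_apply, hGi, hGj, hKi, hKj]; ring)]
        rw [hypIJ_def]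

theorem main (r p n : ℕ) (hr : 3 ≤ r) (hn1 : 1 ≤ n) (hnp : n ≤ p) :
    Module.finrank ℂ (Xval r p n hnp) = p ∧
    ∃ e : (Xval r p n hnp) ≃ₗ[ℂ] (Fin p → ℂ),
      restrictTo (interArr r (p + n) 0) (Xval r p n hnp) e = interArr r p n :=
  ⟨(equivE r p n hnp).finrank_eq.trans (Module.finrank_fin_fun ℂ),
    equivE r p n hnp, main_restrict r p n hr hn1 hnp⟩


end Stmt17Aux
open ArrPaper in
/-- For `1 ≤ n ≤ p`, `ℓ = p + n`, `r ≥ 3`, `W = G(r,r,ℓ)` and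
`X = ⋂_{i=1}^{n} ker (x_{2i-1} - ζ x_{2i})` (0-based: pairs `(2i, 2i+1)`,
`i < n`): `dim X = p` and the restriction `A(W)^X` is isomorphic to `A^n_p(r)`. -/
theorem stmt17 (r p n : ℕ) (hr : 3 ≤ r) (hn1 : 1 ≤ n) (hnp : n ≤ p) :
    let X : Submodule ℂ (Fin (p + n) → ℂ) :=
      ⨅ i : Fin n, hypIJ r (⟨2 * (i : ℕ), by have := i.isLt; omega⟩ : Fin (p + n))
        (⟨2 * (i : ℕ) + 1, by have := i.isLt; omega⟩ : Fin (p + n)) 1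
    Module.finrank ℂ X = p ∧
    ∃ e : X ≃ₗ[ℂ] (Fin p → ℂ),
      restrictTo (interArr r (p + n) 0) X e = interArr r p n := by
  intro X
  exact Stmt17Aux.main r p n hr hn1 hnp
end
end
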